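/- Let K(v) = F(b,β;γ;v)/F(b+1,β;γ;v) with β > 0, 0 < b+1 < γ < b+1+β, -1 < b < 0, and γ < β. Then inf_{0 ≤ v < 1} K(v) ≥ b/(b+1). -/
import Mathlib


open Real Filter MeasureTheory

/-- The Gauss hypergeometric function `F(α, β; γ; z)`, defined by its power series. -/
noncomputable def hypF (α β γ z : ℝ) : ℝ :=
  ∑' i : ℕ, ((ascPochhammer ℝ i).eval α * (ascPochhammer ℝ i).eval β /
      (ascPochhammer ℝ i).eval γ) * z ^ i / (Nat.factorial i)

open Topology

namespace Stmt10Aux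

noncomputable def term (α β γ v : ℝ) (i : ℕ) : ℝ :=
  ((ascPochhammer ℝ i).eval α * (ascPochhammer ℝ i).eval β /
      (ascPochhammer ℝ i).eval γ) * v ^ i / (Nat.factorial i)

lemma hypF_eq (α β γ v : ℝ) : hypF α β γ v = ∑' i, term α β γ v i := rfl

lemma term_zero (α β γ v : ℝ) : term α β γ v 0 = 1 := by simp [term]

lemma term_succ (α β γ v : ℝ) (hγ : 0 < γ) (i : ℕ) :
    term α β γ v (i + 1) =
      term α β γ v i * ((α + i) * (β + i) / ((γ + i) * (i + 1)) * v) := by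
  have hγi : (ascPochhammer ℝ i).eval γ ≠ 0 := (ascPochhammer_pos i γ hγ).ne'
  have hγi' : (γ + (i : ℝ)) ≠ 0 := by positivity
  have hfac : ((i + 1 : ℕ).factorial : ℝ) ≠ 0 := by positivity
  have hfac' : ((i : ℕ).factorial : ℝ) ≠ 0 := by positivity
  have hi1 : ((i : ℝ) + 1) ≠ 0 := by positivity
  simp only [term, ascPochhammer_succ_eval, pow_succ, Nat.factorial_succ, Nat.cast_mul,
    Nat.cast_add, Nat.cast_one]
  field_simp
  try ring

lemma tendsto_aux (a c : ℝ) :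
    Tendsto (fun n : ℕ => (a + n) / (c + n)) atTop (𝓝 1) := by
  have h0 : Tendsto (fun n : ℕ => (a - c) / (c + n)) atTop (𝓝 0) :=
    Tendsto.div_atTop tendsto_const_nhds
      (tendsto_atTop_add_const_left _ c tendsto_natCast_atTop_atTop)
  have h1 : Tendsto (fun n : ℕ => 1 + (a - c) / (c + n)) atTop (𝓝 1) := by
    simpa using (tendsto_const_nhds (x := (1 : ℝ))).add h0
  apply h1.congr'
  filter_upwards [tendsto_natCast_atTop_atTop.eventually_gt_atTop (-c)] with n hn
  have hcn : c + (n : ℝ) ≠ 0 := by linarith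
  field_simp
  try ring

lemma tendsto_ratio (α β γ : ℝ) :
    Tendsto (fun n : ℕ => |(α + n) * (β + n) / ((γ + n) * (n + 1))|) atTop (𝓝 1) := by
  have h := (tendsto_aux α γ).mul (tendsto_aux β 1)
  rw [mul_one] at h
  have h' : Tendsto (fun n : ℕ => (α + n) * (β + n) / ((γ + n) * (n + 1)))
      atTop (𝓝 1) := by
    apply h.congr
    intro n
    rw [div_mul_div_comm, add_comm (1 : ℝ) (n : ℝ)]
  simpa using h'.abs

lemma summable_term (α β γ v : ℝ) (hγ : 0 < γ) (hv0 : 0 ≤ v) (hv1 : v < 1) :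
    Summable (term α β γ v) := by
  rcases eq_or_lt_of_le hv0 with h0 | hvpos
  · apply summable_of_ne_finset_zero (s := {0})
    intro i hi
    have hi0 : i ≠ 0 := by simpa using hi
    obtain ⟨j, rfl⟩ := Nat.exists_eq_succ_of_ne_zero hi0
    simp [term, ← h0, pow_succ]
  · have hr1 : (1 + v) / 2 < 1 := by linarith
    have hvr : v < (1 + v) / 2 := by linarith
    apply summable_of_ratio_norm_eventually_le hr1
    have ht : Tendsto (fun n : ℕ =>
        |(α + n) * (β + n) / ((γ + n) * (n + 1))| * v) atTop (𝓝 v) := by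
      simpa using (tendsto_ratio α β γ).mul_const v
    filter_upwards [ht.eventually_le_const hvr] with n hn
    rw [term_succ α β γ v hγ n]
    rw [norm_mul]
    have h1 : ‖(α + n) * (β + n) / ((γ + n) * (n + 1)) * v‖ =
        |(α + n) * (β + n) / ((γ + n) * (n + 1))| * v := by
      rw [Real.norm_eq_abs, abs_mul, abs_of_nonneg hv0]
    rw [h1, mul_comm ((1 + v) / 2)]
    exact mul_le_mul_of_nonneg_left hn (norm_nonneg _)

lemma term_nonneg (α β γ v : ℝ) (hα : 0 < α) (hβ : 0 < β) (hγ : 0 < γ)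
    (hv0 : 0 ≤ v) (i : ℕ) : 0 ≤ term α β γ v i := by
  unfold term
  apply div_nonneg _ (by positivity)
  apply mul_nonneg _ (by positivity)
  apply div_nonneg
  · exact mul_nonneg (ascPochhammer_pos i α hα).le (ascPochhammer_pos i β hβ).le
  · exact (ascPochhammer_pos i γ hγ).le

lemma eval_succ_left (k : ℕ) (x : ℝ) :
    (ascPochhammer ℝ (k + 1)).eval x = x * (ascPochhammer ℝ k).eval (x + 1) := by
  rw [ascPochhammer_succ_left]
  simp [Polynomial.eval_comp]

lemma combined_nonneg (b β γ v : ℝ) (hb : 0 < b + 1) (hbneg : b < 0) (hβ : 0 < β)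
    (hγ : 0 < γ) (hv0 : 0 ≤ v) (i : ℕ) :
    0 ≤ (b + 1) * term b β γ v i - b * term (b + 1) β γ v i := by
  cases i with
  | zero => simp [term_zero]
  | succ k =>
    set P := (ascPochhammer ℝ k).eval (b + 1) with hP
    have hPpos : 0 < P := ascPochhammer_pos k (b + 1) hb
    set B := (ascPochhammer ℝ (k + 1)).eval β with hB
    set C := (ascPochhammer ℝ (k + 1)).eval γ with hC
    have hBpos : 0 < B := ascPochhammer_pos (k + 1) β hβ
    have hCpos : 0 < C := ascPochhammer_pos (k + 1) γ hγ
    have e1 : (ascPochhammer ℝ (k + 1)).eval b = b * P := eval_succ_left k b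
    have e2 : (ascPochhammer ℝ (k + 1)).eval (b + 1) = P * (b + 1 + k) := by
      rw [ascPochhammer_succ_eval]
    set D := B / C * v ^ (k + 1) / ((k + 1).factorial : ℝ) with hD
    have hDnn : 0 ≤ D := by positivity
    have t1 : term b β γ v (k + 1) = b * P * D := by
      rw [term, e1, hD]; ring
    have t2 : term (b + 1) β γ v (k + 1) = P * (b + 1 + k) * D := by
      rw [term, e2, hD]; ring
    rw [t1, t2]
    have : (b + 1) * (b * P * D) - b * (P * (b + 1 + k) * D) = (-b) * k * P * D := by
      ring
    rw [this]
    have hk : (0 : ℝ) ≤ k := Nat.cast_nonneg k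
    have hnb : 0 ≤ -b := by linarith
    positivity

end Stmt10Aux

open Stmt10Aux in
theorem stmt_10 (b β γ : ℝ) (hβ : 0 < β) (hb : 0 < b + 1) (h1 : b + 1 < γ)
    (h2 : γ < b + 1 + β) (hbneg : -1 < b ∧ b < 0) (hγβ : γ < β) (K : ℝ → ℝ)
    (hK : ∀ v ∈ Set.Ico (0:ℝ) 1, K v = hypF b β γ v / hypF (b + 1) β γ v) :
    ∀ v ∈ Set.Ico (0:ℝ) 1, b / (b + 1) ≤ K v := by
  intro v hv
  obtain ⟨hv0, hv1⟩ := hv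
  have hγ : 0 < γ := lt_trans hb h1
  have hsum1 : Summable (term b β γ v) := summable_term b β γ v hγ hv0 hv1
  have hsum2 : Summable (term (b + 1) β γ v) := summable_term (b + 1) β γ v hγ hv0 hv1
  -- F(b+1) ≥ 1
  have hF1 : (1 : ℝ) ≤ hypF (b + 1) β γ v := by
    rw [hypF_eq]
    have := Summable.le_tsum hsum2 0 (fun j _ => term_nonneg (b + 1) β γ v hb hβ hγ hv0 j)
    rwa [term_zero] at this
  have hF1pos : 0 < hypF (b + 1) β γ v := lt_of_lt_of_le one_pos hF1
  -- combined sum nonneg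
  have hcomb : 0 ≤ (b + 1) * hypF b β γ v - b * hypF (b + 1) β γ v := by
    have h0 : 0 ≤ ∑' i, ((b + 1) * term b β γ v i - b * term (b + 1) β γ v i) :=
      tsum_nonneg (fun i => combined_nonneg b β γ v hb hbneg.2 hβ hγ hv0 i)
    rwa [Summable.tsum_sub (hsum1.mul_left (b + 1)) (hsum2.mul_left b), tsum_mul_left,
      tsum_mul_left, ← hypF_eq, ← hypF_eq] at h0
  rw [hK v ⟨hv0, hv1⟩, div_le_div_iff₀ hb hF1pos]
  nlinarith [hcomb]
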